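/- arXiv:2506.18616 — 7 statements merged into one kernel-verified Lean document; each statement's English description precedes it below -/
import Mathlib

section
/- Let X be a set and S a ring of sets over X. Let μ be an additive content over S. If μ is continuous at the empty set — that is, for every non-increasing (for set inclusion) sequence (A_n) of elements of S with empty intersection, μ(A_n) tends to 0 as n → ∞ — then μ is σ-sub-additive: for every sequence (A_n) of elements of S whose union also belongs to S, μ(⋃_n A_n) ≤ ∑_n μ(A_n). -/
open MeasureTheory ProbabilityTheory Preorder Filter
open scoped ENNReal ProbabilityTheory Topology

/-!
Let `U = ⋃ n, A n` and `Bₙ = A₀ ∪ ⋯ ∪ Aₙ`. Finite subadditivity gives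
`m U ≤ m Bₙ + m (U \ Bₙ) ≤ ∑' n, m (A n) + m (U \ Bₙ)`, and the sets `U \ Bₙ` decrease to `∅`,
so continuity at `∅` kills the error term.
-/

namespace MeasureTheory

variable {α : Type*} {C : Set (Set α)}

lemma addContent_le_add_addContent_sdiff {G : Type*} [AddCommMonoid G] [PartialOrder G]
    [CanonicallyOrderedAdd G] {m : AddContent G C} (hC : IsSetRing C) {s t : Set α}
    (hs : s ∈ C) (ht : t ∈ C) :
    m t ≤ m s + m (t \ s) :=
  calc m t ≤ m (s ∪ t \ s) :=
        addContent_mono hC.isSetSemiring ht (hC.union_mem hs (hC.sdiff_mem ht hs))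
          (by rw [Set.union_sdiff_self]; exact Set.subset_union_right)
    _ ≤ m s + m (t \ s) := addContent_union_le hC hs (hC.sdiff_mem ht hs)

lemma antitone_iUnion_sdiff {B : ℕ → Set α} (hB : Monotone B) :
    Antitone fun n ↦ (⋃ i, B i) \ B n :=
  fun _ _ hij ↦ Set.sdiff_subset_sdiff_right (hB hij)

lemma iInter_iUnion_sdiff_eq_empty (B : ℕ → Set α) : ⋂ n, (⋃ i, B i) \ B n = ∅ := by
  simp_rw [Set.sdiff_eq, ← Set.inter_iInter, ← Set.compl_iUnion, Set.inter_compl_self]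

lemma tendsto_addContent_iUnion_sdiff {m : AddContent ℝ≥0∞ C}
    (hcont : ∀ A : ℕ → Set α, (∀ n, A n ∈ C) → Antitone A → (⋂ n, A n) = ∅ →
      Tendsto (fun n ↦ m (A n)) atTop (𝓝 0))
    (hC : IsSetRing C) {B : ℕ → Set α} (hBC : ∀ n, B n ∈ C) (hB : Monotone B)
    (hU : (⋃ i, B i) ∈ C) :
    Tendsto (fun n ↦ m ((⋃ i, B i) \ B n)) atTop (𝓝 0) :=
  hcont _ (fun n ↦ hC.sdiff_mem hU (hBC n)) (antitone_iUnion_sdiff hB)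
    (iInter_iUnion_sdiff_eq_empty B)

end MeasureTheory

/-- If an additive content over a ring of sets is continuous at the empty set, then it is
σ-sub-additive. -/
theorem addContent_sigma_subadditive_of_tendsto_zero_empty {α : Type*} {C : Set (Set α)}
    (hC : IsSetRing C) (m : AddContent ℝ≥0∞ C)
    (hcont : ∀ A : ℕ → Set α, (∀ n, A n ∈ C) → Antitone A → (⋂ n, A n) = ∅ →
      Tendsto (fun n ↦ m (A n)) atTop (𝓝 0)) :
    ∀ A : ℕ → Set α, (∀ n, A n ∈ C) → (⋃ n, A n) ∈ C →
      m (⋃ n, A n) ≤ ∑' n, m (A n) := by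
  intro A hA hU
  have hBC : ∀ n, partialSups A n ∈ C := hC.partialSups_mem hA
  have hBU : ⋃ n, partialSups A n = ⋃ n, A n := by
    rw [← Set.iSup_eq_iUnion, iSup_partialSups_eq, Set.iSup_eq_iUnion]
  have hbound (n : ℕ) : m (⋃ i, A i) ≤ ∑' i, m (A i) + m ((⋃ i, A i) \ partialSups A n) :=
    calc m (⋃ i, A i) ≤ m (partialSups A n) + m ((⋃ i, A i) \ partialSups A n) :=
          addContent_le_add_addContent_sdiff hC (hBC n) hU
      _ ≤ ∑' i, m (A i) + m ((⋃ i, A i) \ partialSups A n) := by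
          rw [partialSups_eq_biUnion_range]
          gcongr
          exact (addContent_biUnion_le hC fun i _ ↦ hA i).trans (ENNReal.sum_le_tsum _)
  have herr : Tendsto (fun n ↦ m ((⋃ i, A i) \ partialSups A n)) atTop (𝓝 0) := by
    simpa only [hBU] using
      tendsto_addContent_iUnion_sdiff hcont hC hBC (partialSups_monotone A) (hBU ▸ hU)
  simpa only [add_zero] using ge_of_tendsto' (herr.const_add (∑' i, m (A i))) hbound
end

section
/- (Ionescu–Tulcea) Let (X_n, A_n)_{n∈ℕ} be a family of measurable spaces and (κ_n)_{n∈ℕ} a family of Markov kernels with κ_n a kernel from ∏_{i≤n} X_i to X_{n+1}. Then for every a ∈ ℕ there exists a Markov kernel ξ_a from ∏_{i≤a} X_i to ∏_{n∈ℕ} X_n such that for every b ∈ ℕ, the pushforward of ξ_a under the restriction map π_b : ∏_{n∈ℕ} X_n → ∏_{i≤b} X_i equals the partial-trajectory kernel η_{a,b}. -/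
open MeasureTheory ProbabilityTheory Preorder Filter
open scoped ENNReal ProbabilityTheory Topology

variable {X : ℕ → Type*} [∀ n, MeasurableSpace (X n)]

/-- Canonical map gluing a trajectory up to time `b` with a point of `X (b + 1)` into a
trajectory up to time `b + 1`. -/
def IicProdSucc (b : ℕ) (p : (Π i : Finset.Iic b, X i) × X (b + 1)) :
    Π i : Finset.Iic (b + 1), X i :=
  fun i ↦ if h : i.1 ≤ b then p.1 ⟨i.1, Finset.mem_Iic.2 h⟩
    else cast (congrArg X (Nat.le_antisymm (Finset.mem_Iic.1 i.2)
      (Nat.lt_of_not_le h))).symm p.2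

/-- The partial trajectory kernel `η_{a,b}` built from the kernels `κ n`: for `b ≤ a` it is the
deterministic kernel given by the restriction map, and `η_{a,b+1}` is obtained from `η_{a,b}` by
composing with the product of the identity kernel and `κ b`. -/
noncomputable def partialTraj (κ : ∀ n, Kernel (Π i : Finset.Iic n, X i) (X (n + 1))) (a : ℕ) :
    (b : ℕ) → Kernel (Π i : Finset.Iic a, X i) (Π i : Finset.Iic b, X i)
  | 0 => Kernel.deterministic (frestrictLe₂ (Nat.zero_le a)) (measurable_frestrictLe₂ _)
  | b + 1 =>
    if h : b + 1 ≤ a then Kernel.deterministic (frestrictLe₂ h) (measurable_frestrictLe₂ h)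
    else ((Kernel.id ×ₖ κ b) ∘ₖ partialTraj κ a b).map (IicProdSucc b)

/-! The kernel is Mathlib's `Kernel.traj`: for each `x`, the projective family `η_{a,b} x`
defines a σ-subadditive content on cylinders, extended by Carathéodory. Mathlib's
`Kernel.partialTraj` glues in `κ b` through `X (b + 1) ≃ᵐ Π i : Ioc b (b + 1), X i`; up to
that identification it satisfies the same recursion as `partialTraj`. -/

lemma IicProdIoc_comp_prodMap_piSingleton (b : ℕ) :
    IicProdIoc (X := X) b (b + 1) ∘ Prod.map id (MeasurableEquiv.piSingleton b)
      = IicProdSucc b := by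
  ext p ⟨i, hi⟩
  by_cases h : i ≤ b
  · simp [IicProdIoc, IicProdSucc, h]
  · obtain rfl : i = b + 1 := by grind
    simp [IicProdIoc, IicProdSucc, MeasurableEquiv.piSingleton]

lemma partialTraj_eq_kernel_partialTraj
    (κ : ∀ n, Kernel (Π i : Finset.Iic n, X i) (X (n + 1))) [∀ n, IsSFiniteKernel (κ n)]
    (a b : ℕ) : partialTraj κ a b = Kernel.partialTraj κ a b := by
  induction b with
  | zero => rw [Kernel.partialTraj_zero]; rfl
  | succ b ih =>
    by_cases hba : b + 1 ≤ a
    · rw [partialTraj, dif_pos hba, Kernel.partialTraj_le hba]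
    · rw [partialTraj, dif_neg hba, Kernel.partialTraj_succ_of_le (by omega), ← ih,
        ← Kernel.map_id Kernel.id, Kernel.map_prod_map _ _ measurable_id (by fun_prop),
        Kernel.map_id, ← Kernel.map_comp, ← Kernel.map_comp_right _ (by fun_prop) (by fun_prop),
        IicProdIoc_comp_prodMap_piSingleton]

/-- **Ionescu-Tulcea theorem**: there exists a Markov kernel `ξ_a` from `Π i : Iic a, X i` to
`Π n, X n` whose pushforward under each restriction map `π_b` is the partial trajectory
kernel `η_{a,b}`. -/
theorem ionescu_tulcea (κ : ∀ n, Kernel (Π i : Finset.Iic n, X i) (X (n + 1)))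
    [∀ n, IsMarkovKernel (κ n)] (a : ℕ) :
    ∃ ξ : Kernel (Π i : Finset.Iic a, X i) (Π n, X n), IsMarkovKernel ξ ∧
      ∀ b : ℕ, ξ.map (frestrictLe b) = partialTraj κ a b :=
  ⟨Kernel.traj κ a, inferInstance, fun b ↦ by
    rw [Kernel.traj_map_frestrictLe, partialTraj_eq_kernel_partialTraj]⟩
end

section
/- Let (X_n, A_n)_{n∈ℕ} be measurable spaces and (κ_n : ∏_{i≤n} X_i ⇝ X_{n+1})_{n∈ℕ} Markov kernels. For every a ∈ ℕ and every x ∈ ∏_{i≤a} X_i, the set function P_a(x,·) defined on measurable cylinders of ∏_{n>a} X_n by P_a(x, A × ∏_{n>b} X_n) := η_{a,b}(x, A) for A measurable in ∏_{a<i≤b} X_i is a well-defined additive content over the ring of measurable cylinders. -/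
open MeasureTheory ProbabilityTheory Preorder Filter
open scoped ENNReal ProbabilityTheory Topology

variable {X : ℕ → Type*} [∀ n, MeasurableSpace (X n)]

/-- The kernel `η_{a,b} = κ_a ⊗ₖ … ⊗ₖ κ_{b-1}` from `Π i : Iic a, X i` to `Π i : Ioc a b, X i`,
realized as the restriction to the coordinates in `(a, b]` of the partial trajectory kernel. -/
noncomputable def iocTraj (κ : ∀ n, Kernel (Π i : Finset.Iic n, X i) (X (n + 1))) (a b : ℕ) :
    Kernel (Π i : Finset.Iic a, X i) (Π i : Finset.Ioc a b, X i) :=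
  (partialTraj κ a b).map
    (fun y (i : Finset.Ioc a b) ↦ y ⟨i.1, Finset.mem_Iic.2 (Finset.mem_Ioc.1 i.2).2⟩)

/-!
Because every `κ n` is Markov, forgetting the last coordinate of a trajectory drawn from
`partialTraj κ a (b + 1) x` gives the law `partialTraj κ a b x`; hence the laws `η_{a,b}(x, ·)`
are consistent under restriction of `(a, c]` to `(a, b]`. Pushing `η_{a,b}(x, ·)` forward to the coordinates in a
finite set `J ⊆ (a, b]` therefore does not depend on the bound `b`, and these image measures form
a projective family. The additive content of a projective family on the measurable cylinders
takes the value `P_J(S)` on the cylinder over `S ⊆ ∏_{j ∈ J} X_j`, which is the claim for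
`J = (a, b]`.
-/

lemma measurable_iicProdSucc (b : ℕ) : Measurable (IicProdSucc (X := X) b) := by
  refine measurable_pi_lambda _ fun i ↦ ?_
  by_cases h : i.1 ≤ b
  · simp only [IicProdSucc, dif_pos h]
    exact measurable_fst.eval
  · obtain ⟨i, hi⟩ := i
    obtain rfl : i = b + 1 := Nat.le_antisymm (Finset.mem_Iic.1 hi) (Nat.lt_of_not_le h)
    simpa only [IicProdSucc, dif_neg h, cast_eq] using measurable_snd

section PartialTraj

variable (κ : ∀ n, Kernel (Π i : Finset.Iic n, X i) (X (n + 1)))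

lemma partialTraj_le {a b : ℕ} (h : b ≤ a) :
    partialTraj κ a b = Kernel.deterministic (frestrictLe₂ h) (measurable_frestrictLe₂ h) := by
  cases b with
  | zero => rfl
  | succ b => rw [partialTraj, dif_pos h]

lemma partialTraj_succ_of_lt {a b : ℕ} (h : a < b + 1) :
    partialTraj κ a (b + 1) = ((Kernel.id ×ₖ κ b) ∘ₖ partialTraj κ a b).map (IicProdSucc b) := by
  rw [partialTraj, dif_neg (Nat.not_le.2 h)]

variable [∀ n, IsMarkovKernel (κ n)]

instance (a b : ℕ) : IsMarkovKernel (partialTraj κ a b) := by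
  induction b with
  | zero => rw [partialTraj]; infer_instance
  | succ b ih =>
    rw [partialTraj]
    split_ifs
    · infer_instance
    · exact Kernel.IsMarkovKernel.map _ (measurable_iicProdSucc b)

lemma partialTraj_succ_map_frestrictLe₂ (a b : ℕ) :
    (partialTraj κ a (b + 1)).map (frestrictLe₂ b.le_succ) = partialTraj κ a b := by
  obtain hab | hba := lt_or_ge a (b + 1)
  · have hfst : frestrictLe₂ (π := X) b.le_succ ∘ IicProdSucc b = Prod.fst := by
      funext p
      ext i
      simp [IicProdSucc, Finset.mem_Iic.1 i.2]
    rw [partialTraj_succ_of_lt κ hab, ← Kernel.map_comp_right _ (measurable_iicProdSucc b)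
      (measurable_frestrictLe₂ _), hfst, Kernel.map_comp, ← Kernel.fst_eq, Kernel.fst_prod,
      Kernel.id_comp]
  · rw [partialTraj_le κ hba, partialTraj_le κ (Nat.le_of_succ_le hba),
      Kernel.deterministic_map _ (measurable_frestrictLe₂ _)]
    rfl

lemma partialTraj_map_frestrictLe₂ (a : ℕ) {b c : ℕ} (hbc : b ≤ c) :
    (partialTraj κ a c).map (frestrictLe₂ hbc) = partialTraj κ a b := by
  induction c, hbc using Nat.le_induction with
  | base => exact Kernel.map_id _
  | succ c hbc ih =>
    rw [← ih, ← frestrictLe₂_comp_frestrictLe₂ hbc c.le_succ,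
      Kernel.map_comp_right _ (measurable_frestrictLe₂ _) (measurable_frestrictLe₂ _),
      partialTraj_succ_map_frestrictLe₂]

lemma iocTraj_map_restrict₂ (a : ℕ) {b c : ℕ} (hbc : b ≤ c) :
    (iocTraj κ a c).map (Finset.restrict₂ (Finset.Ioc_subset_Ioc_right hbc)) = iocTraj κ a b := by
  rw [iocTraj, iocTraj, ← Kernel.map_comp_right _ (by fun_prop) (by fun_prop),
    ← partialTraj_map_frestrictLe₂ κ a hbc, ← Kernel.map_comp_right _ (by fun_prop) (by fun_prop)]
  rfl

end PartialTraj

section IocProjectiveFamily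

variable {a : ℕ}

def iocRestrict {b : ℕ} (J : Finset {n : ℕ // a < n}) (hJ : ∀ j ∈ J, (j : ℕ) ≤ b)
    (y : Π i : Finset.Ioc a b, X i) (j : J) : X j.1.1 :=
  y ⟨j.1.1, Finset.mem_Ioc.2 ⟨j.1.2, hJ j.1 j.2⟩⟩

lemma measurable_iocRestrict {b : ℕ} (J : Finset {n : ℕ // a < n})
    (hJ : ∀ j ∈ J, (j : ℕ) ≤ b) : Measurable (iocRestrict (X := X) J hJ) :=
  measurable_pi_lambda _ fun _ ↦ measurable_pi_apply _

noncomputable def iocProjectiveFamily (μ : ∀ b, Measure (Π i : Finset.Ioc a b, X i))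
    (J : Finset {n : ℕ // a < n}) : Measure (Π j : J, X j.1.1) :=
  (μ (J.sup fun j ↦ (j : ℕ))).map (iocRestrict J fun _ hj ↦ Finset.le_sup hj)

variable {μ : ∀ b, Measure (Π i : Finset.Ioc a b, X i)}
  (hμ : ∀ b c (hbc : b ≤ c),
    (μ c).map (Finset.restrict₂ (Finset.Ioc_subset_Ioc_right hbc)) = μ b)
include hμ

lemma iocProjectiveFamily_eq {b : ℕ} (J : Finset {n : ℕ // a < n})
    (hJ : ∀ j ∈ J, (j : ℕ) ≤ b) : iocProjectiveFamily μ J = (μ b).map (iocRestrict J hJ) := by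
  rw [iocProjectiveFamily, ← hμ _ b (Finset.sup_le hJ),
    Measure.map_map (measurable_iocRestrict _ _) (Finset.measurable_restrict₂ _)]
  rfl

lemma isProjectiveMeasureFamily_iocProjectiveFamily :
    IsProjectiveMeasureFamily (α := fun n : {n : ℕ // a < n} ↦ X n) (iocProjectiveFamily μ) := by
  intro I J hJI
  have hJ : ∀ j ∈ J, (j : ℕ) ≤ I.sup fun i ↦ (i : ℕ) := fun _ hj ↦ Finset.le_sup (hJI hj)
  rw [iocProjectiveFamily_eq hμ J hJ, iocProjectiveFamily,
    Measure.map_map (Finset.measurable_restrict₂ (X := fun n : {n : ℕ // a < n} ↦ X n) hJI)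
      (measurable_iocRestrict _ _)]
  rfl

end IocProjectiveFamily

/-- The set function `P_a(x, ·)`, defined on measurable cylinders of `∏_{n > a} X_n` by
`P_a(x, A × ∏_{n > b} X_n) = η_{a,b}(x, A)`, is a well-defined additive content over the ring
of measurable cylinders. -/
theorem exists_addContent_cylinders_eq_iocTraj
    (κ : ∀ n, Kernel (Π i : Finset.Iic n, X i) (X (n + 1))) [∀ n, IsMarkovKernel (κ n)]
    (a : ℕ) (x : Π i : Finset.Iic a, X i) :
    ∃ m : AddContent ℝ≥0∞ (measurableCylinders (fun n : {n : ℕ // a < n} ↦ X n)),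
      ∀ (b : ℕ) (A : Set (Π i : Finset.Ioc a b, X i)), MeasurableSet A →
        m (cylinder ((Finset.Ioc a b).subtype (fun n ↦ a < n))
            ((fun (z : Π j : ((Finset.Ioc a b).subtype (fun n ↦ a < n)), X j.1.1)
                (i : Finset.Ioc a b) ↦
              z ⟨⟨i.1, (Finset.mem_Ioc.1 i.2).1⟩, Finset.mem_subtype.2 i.2⟩) ⁻¹' A)) =
          iocTraj κ a b x A := by
  have hμ : ∀ b c (hbc : b ≤ c), (iocTraj κ a c x).map
      (Finset.restrict₂ (Finset.Ioc_subset_Ioc_right hbc)) = iocTraj κ a b x :=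
    fun b c hbc ↦ by
      rw [← Kernel.map_apply _ (Finset.measurable_restrict₂ _), iocTraj_map_restrict₂ κ a hbc]
  have hP := isProjectiveMeasureFamily_iocProjectiveFamily hμ
  refine ⟨projectiveFamilyContent hP, fun b A hA ↦ ?_⟩
  have hJ : ∀ j ∈ (Finset.Ioc a b).subtype (fun n ↦ a < n), (j : ℕ) ≤ b :=
    fun j hj ↦ (Finset.mem_Ioc.1 (Finset.mem_subtype.1 hj)).2
  rw [projectiveFamilyContent_cylinder hP (hA.preimage ?_), iocProjectiveFamily_eq hμ _ hJ,
    Measure.map_apply (measurable_iocRestrict _ _) (hA.preimage ?_)]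
  · rfl
  all_goals fun_prop
end

section
/- Let (X_n, A_n)_{n∈ℕ} be measurable spaces and (κ_n : ∏_{i≤n} X_i ⇝ X_{n+1})_{n∈ℕ} Markov kernels. For a ≤ b ≤ c in ℕ and every measurable function f : ∏_{n∈ℕ} X_n → [0,∞], integrating the partial marginal of f between b and c against η_{a,b} gives the partial marginal of f between a and c: lmarginal_{a,b}(lmarginal_{b,c} f) = lmarginal_{a,c} f. -/
open MeasureTheory ProbabilityTheory Preorder Filter
open scoped ENNReal ProbabilityTheory Topology

variable {X : ℕ → Type*} [∀ n, MeasurableSpace (X n)]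

/-- Integration of a function `f : (Π n, X n) → ℝ≥0∞` against the partial trajectory kernel
`η_{a,b}`: the coordinates up to `b` are integrated out, the others are kept fixed. -/
noncomputable def lmarginalPartialTraj (κ : ∀ n, Kernel (Π i : Finset.Iic n, X i) (X (n + 1)))
    (a b : ℕ) (f : (Π n, X n) → ℝ≥0∞) (x : Π n, X n) : ℝ≥0∞ :=
  ∫⁻ y : Π i : Finset.Iic b, X i,
    f (fun n ↦ if h : n ≤ b then y ⟨n, Finset.mem_Iic.2 h⟩ else x n)
    ∂(partialTraj κ a b (frestrictLe a x))

open Finset Function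

section PartialTraj

variable (κ : ∀ n, Kernel (Π i : Iic n, X i) (X (n + 1)))

lemma partialTraj_self (b : ℕ) : partialTraj κ b b = Kernel.id := by
  cases b with
  | zero => rfl
  | succ b => rw [partialTraj, dif_pos le_rfl]; rfl

lemma partialTraj_succ_of_le {a b : ℕ} (hab : a ≤ b) :
    partialTraj κ a (b + 1) = ((Kernel.id ×ₖ κ b) ∘ₖ partialTraj κ a b).map (IicProdSucc b) := by
  rw [partialTraj, dif_neg (by omega)]

lemma partialTraj_comp_partialTraj {a b c : ℕ} (hab : a ≤ b) (hbc : b ≤ c) :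
    partialTraj κ b c ∘ₖ partialTraj κ a b = partialTraj κ a c := by
  induction c, hbc using Nat.le_induction with
  | base => rw [partialTraj_self, Kernel.id_comp]
  | succ c hbc ih =>
    rw [partialTraj_succ_of_le κ hbc, partialTraj_succ_of_le κ (hab.trans hbc), ← Kernel.map_comp,
      Kernel.comp_assoc, ih]

lemma lmarginalPartialTraj_eq_lintegral_updateFinset (a b : ℕ) (f : (Π n, X n) → ℝ≥0∞)
    (x : Π n, X n) :
    lmarginalPartialTraj κ a b f x =
      ∫⁻ y, f (updateFinset x (Iic b) y) ∂(partialTraj κ a b (frestrictLe a x)) := by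
  unfold lmarginalPartialTraj updateFinset
  simp_rw [mem_Iic]

end PartialTraj

theorem lmarginalPartialTraj_self_general (κ : ∀ n, Kernel (Π i : Finset.Iic n, X i) (X (n + 1)))
    {a b c : ℕ} (hab : a ≤ b) (hbc : b ≤ c)
    {f : (Π n, X n) → ℝ≥0∞} (hf : Measurable f) :
    lmarginalPartialTraj κ a b (lmarginalPartialTraj κ b c f) = lmarginalPartialTraj κ a c f := by
  ext x
  simp_rw [lmarginalPartialTraj_eq_lintegral_updateFinset, frestrictLe, restrict_updateFinset,
    updateFinset_updateFinset_of_subset (Iic_subset_Iic.2 hbc)]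
  rw [← partialTraj_comp_partialTraj κ hab hbc]
  exact (Kernel.lintegral_comp _ _ _ (hf.comp measurable_updateFinset)).symm

/-- For `a ≤ b ≤ c`, integrating the partial marginal of `f` between `b` and `c` against
`η_{a,b}` gives the partial marginal of `f` between `a` and `c`. -/
theorem lmarginalPartialTraj_self (κ : ∀ n, Kernel (Π i : Finset.Iic n, X i) (X (n + 1)))
    [∀ n, IsMarkovKernel (κ n)] {a b c : ℕ} (hab : a ≤ b) (hbc : b ≤ c)
    {f : (Π n, X n) → ℝ≥0∞} (hf : Measurable f) :
    lmarginalPartialTraj κ a b (lmarginalPartialTraj κ b c f) = lmarginalPartialTraj κ a c f :=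
  lmarginalPartialTraj_self_general κ hab hbc hf
end

section
/- Let (X_n, A_n)_{n∈ℕ} be measurable spaces and (κ_n : ∏_{i≤n} X_i ⇝ X_{n+1})_{n∈ℕ} Markov kernels. For all a ≤ b in ℕ and every u ∈ ∏_{i≤a} X_i, the composition-product of the measure η_{a,b}(u) with the trajectory kernel ξ_b equals the pushforward of ξ_a(u) under the map y ↦ (π_b(y), y): η_{a,b}(u) ⊗ₘ ξ_b = (y ↦ (π_b(y), y))_* ξ_a(u), as probability measures on (∏_{i≤b} X_i) × (∏_{n∈ℕ} X_n). -/
/-!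
The recursion defining `partialTraj` is that of Mathlib's `Kernel.partialTraj`, once `X (b + 1)`
is identified with `Π i : Ioc b (b + 1), X i`. By uniqueness in the Ionescu–Tulcea theorem each
`ξ n` is then `Kernel.traj κ n`, for which the identity is `Kernel.partialTraj_compProd_traj`.
-/

open MeasureTheory ProbabilityTheory Preorder Filter
open scoped ENNReal ProbabilityTheory Topology

variable {X : ℕ → Type*} [∀ n, MeasurableSpace (X n)]

/-- For `a ≤ b` and `u : Π i : Iic a, X i`, the composition-product of the measure
`η_{a,b}(u)` with the trajectory kernel `ξ_b` is the pushforward of `ξ_a(u)` under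
`y ↦ (π_b y, y)`. The trajectory kernels `ξ` are characterized by the fact that the
pushforward of `ξ_a` under each restriction map `π_b` is `η_{a,b}`. -/
theorem partialTraj_compProd_traj (κ : ∀ n, Kernel (Π i : Finset.Iic n, X i) (X (n + 1)))
    [∀ n, IsMarkovKernel (κ n)]
    (ξ : ∀ n : ℕ, Kernel (Π i : Finset.Iic n, X i) (Π n, X n))
    (hchar : ∀ n b : ℕ, (ξ n).map (frestrictLe b) = partialTraj κ n b)
    {a b : ℕ} (hab : a ≤ b) (u : Π i : Finset.Iic a, X i) :
    (partialTraj κ a b u) ⊗ₘ (ξ b) = (ξ a u).map (fun x ↦ (frestrictLe b x, x)) := by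
  have hξ : ∀ n, ξ n = Kernel.traj κ n := fun n ↦
    Kernel.eq_traj κ (ξ n) fun c ↦ by rw [hchar, partialTraj_eq_kernel_partialTraj]
  rw [hξ, hξ, partialTraj_eq_kernel_partialTraj, Kernel.partialTraj_compProd_traj hab]
end

section
/- Let (X_i, A_i, μ_i)_{i∈ι} be an arbitrary family of probability spaces. Then there exists a unique probability measure ⊗_{i∈ι} μ_i on the product measurable space (∏_{i∈ι} X_i, ⊗_{i∈ι} A_i) such that for every finite subset I ⊆ ι, the pushforward of ⊗_{i∈ι} μ_i under the canonical projection π_I : ∏_{i∈ι} X_i → ∏_{i∈I} X_i equals the finite product measure ⊗_{i∈I} μ_i. -/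
open MeasureTheory

/-- Existence and uniqueness of the product of an arbitrary family of probability measures:
there is a unique probability measure on `Π i, X i` whose pushforward under each restriction
map to a finite set of coordinates `I` is the finite product measure `⊗_{i ∈ I} μ i`. -/
theorem exists_unique_productMeasure {ι : Type*} {X : ι → Type*} [∀ i, MeasurableSpace (X i)]
    (μ : ∀ i, Measure (X i)) [∀ i, IsProbabilityMeasure (μ i)] :
    ∃! ν : Measure (Π i, X i), IsProbabilityMeasure ν ∧
      ∀ I : Finset ι, ν.map I.restrict = Measure.pi (fun i : I ↦ μ i) := by
  refine ⟨Measure.infinitePi μ, ⟨inferInstance, fun I ↦ Measure.infinitePi_map_restrict μ⟩, ?_⟩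
  rintro ν ⟨-, hν⟩
  exact IsProjectiveLimit.unique hν (Measure.isProjectiveLimit_infinitePi μ)
end

section
/- Let (X_i, A_i, μ_i)_{i∈ι} be a family of probability spaces, and for each finite I ⊆ ι let μ_I := ⊗_{i∈I} μ_i be the finite product measure. If (A_n)_{n∈ℕ} is a non-increasing sequence of measurable cylinders of ∏_{i∈ι} X_i with empty intersection, then the content P(A_n) → 0 as n → ∞, where P(π_I^{-1}(A)) := (⊗_{i∈I} μ_i)(A) for any finite I and measurable A ⊆ ∏_{i∈I} X_i. Consequently P is σ-sub-additive on measurable cylinders. -/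
open MeasureTheory ProbabilityTheory Preorder Filter
open scoped ENNReal ProbabilityTheory Topology

lemma MeasureTheory.AddContent.eq_piContent_of_mem_measurableCylinders
    {ι : Type*} {X : ι → Type*} [∀ i, MeasurableSpace (X i)]
    (μ : ∀ i, Measure (X i)) [∀ i, IsProbabilityMeasure (μ i)]
    (m : AddContent ℝ≥0∞ (measurableCylinders X))
    (hm : ∀ (I : Finset ι) (A : Set (∀ i : I, X i)), MeasurableSet A →
      m (cylinder I A) = Measure.pi (fun i : I ↦ μ i) A)
    ⦃s : Set (Π i, X i)⦄ (hs : s ∈ measurableCylinders X) :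
    m s = piContent μ s := by
  obtain ⟨I, S, hS, rfl⟩ := (mem_measurableCylinders s).1 hs
  rw [hm I S hS, piContent_cylinder μ hS]

/-- The additive content on measurable cylinders induced by the finite products of a family
of probability measures tends to `0` along every non-increasing sequence of measurable
cylinders with empty intersection; consequently it is σ-sub-additive on measurable
cylinders. -/
theorem tendsto_zero_and_sigma_subadditive_prodContent
    {ι : Type*} {X : ι → Type*} [∀ i, MeasurableSpace (X i)]
    (μ : ∀ i, Measure (X i)) [∀ i, IsProbabilityMeasure (μ i)]
    (m : AddContent ℝ≥0∞ (measurableCylinders X))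
    (hm : ∀ (I : Finset ι) (A : Set (∀ i : I, X i)), MeasurableSet A →
      m (cylinder I A) = Measure.pi (fun i : I ↦ μ i) A) :
    (∀ A : ℕ → Set (Π i, X i), (∀ n, A n ∈ measurableCylinders X) → Antitone A →
      (⋂ n, A n) = ∅ → Tendsto (fun n ↦ m (A n)) atTop (𝓝 0)) ∧
    (∀ A : ℕ → Set (Π i, X i), (∀ n, A n ∈ measurableCylinders X) →
      (⋃ n, A n) ∈ measurableCylinders X →
      m (⋃ n, A n) ≤ ∑' n, m (A n)) := by
  have hcyl := m.eq_piContent_of_mem_measurableCylinders μ hm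
  refine ⟨fun A hA hanti hinter ↦ ?_, fun A hA hU ↦ ?_⟩
  · simpa only [hcyl (hA _)] using piContent_tendsto_zero μ hA hanti hinter
  · simpa only [hcyl hU, hcyl (hA _)] using isSigmaSubadditive_piContent μ hA hU
end
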